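/- Let G be a finite, r-regular, connected, non-bipartite graph, let α = 1, and let u = (1/m,…,1/m) be the uniform measure. Then for every equilibrium v ∈ Λ with v ≠ u there exists an index i with v_i = 0 and ∂L/∂v_i(v) = -1 + (1/N) Σ_{j ∼ i} 1/(v_i + v_j) > 0; in particular every element of Λ \ {u} is an unstable equilibrium, and u is the only equilibrium with all coordinates positive. -/

import Mathlib

/-!
At `α = 1` the field has replicator form, `F_i(v) = v_i ∂L/∂v_i(v)`. So an equilibrium with
`∂L/∂v_i(v) ≤ 0` at every zero coordinate satisfies the Karush–Kuhn–Tucker conditions: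
`∂L/∂v_i ≤ 0` everywhere, with equality where `v_i > 0`. Put `t = v - r/(2N)`. By regularity,
`∑_{j ∼ i} (t_i + t_j)/(v_i + v_j) = -r ∂L/∂v_i(v)`, hence
`∑_i t_i ∑_{j ∼ i} (t_i + t_j)/(v_i + v_j) ≤ 0`, as `t_i ≤ 0` wherever `v_i = 0`.
Symmetrising over edges, the same sum equals `½ ∑_i ∑_{j ∼ i} (t_i + t_j)²/(v_i + v_j) ≥ 0`,
so `t_j = -t_i` along every edge. On a connected graph `|t|` is then constant, and were it
nonzero the sign of `t` would 2-colour `G`. So `v` is constant, i.e. `v = u`.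
-/

open MeasureTheory Filter Topology

/-- The domain `Δ`: nonnegative vectors summing to `1` whose coordinates sum to at least `c`
on every edge of `G`. -/
def simplexDomain (m : ℕ) (G : SimpleGraph (Fin m)) (c : ℝ) : Set (Fin m → ℝ) :=
  {x | (∀ i, 0 ≤ x i) ∧ (∑ i, x i) = 1 ∧ ∀ i j, G.Adj i j → c ≤ x i + x j}

/-- The vector field `F` of the urn process:
`F_i(x) = -x_i + (1/N) ∑_{j ∼ i} x_i^α / (x_i^α + x_j^α)`. -/
noncomputable def urnField (m : ℕ) (G : SimpleGraph (Fin m)) [DecidableRel G.Adj] (α : ℝ)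
    (x : Fin m → ℝ) : Fin m → ℝ :=
  fun i => -x i + (1 / (G.edgeFinset.card : ℝ)) *
    ∑ j ∈ G.neighborFinset i, x i ^ α / (x i ^ α + x j ^ α)

/-- The equilibria set `Λ` of the vector field `F` on `Δ`. -/
def equilibria (m : ℕ) (G : SimpleGraph (Fin m)) [DecidableRel G.Adj] (α c : ℝ) :
    Set (Fin m → ℝ) :=
  {x ∈ simplexDomain m G c | urnField m G α x = 0}

/-- The partial derivative `∂L/∂v_i (v) = -1 + (1/N) ∑_{j ∼ i} v_i^(α-1) / (v_i^α + v_j^α)`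
of the Lyapunov function `L`. -/
noncomputable def lyapGrad (m : ℕ) (G : SimpleGraph (Fin m)) [DecidableRel G.Adj] (α : ℝ)
    (v : Fin m → ℝ) (i : Fin m) : ℝ :=
  -1 + (1 / (G.edgeFinset.card : ℝ)) *
    ∑ j ∈ G.neighborFinset i, v i ^ (α - 1) / (v i ^ α + v j ^ α)

namespace SimpleGraph

variable {V R : Type*} {G : SimpleGraph V}

theorem Connected.eq_zero_of_forall_adj_add_eq_zero [AddCommGroup R] [LinearOrder R]
    [IsOrderedAddMonoid R] (hconn : G.Connected) (hnb : ¬ G.Colorable 2) {t : V → R}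
    (ht : ∀ i j, G.Adj i j → t i + t j = 0) (i : V) : t i = 0 := by
  have habs : ∀ {a b : V}, G.Walk a b → |t a| = |t b| := by
    intro a b w
    induction w with
    | nil => rfl
    | cons hab _ ih => rw [← ih, eq_neg_of_add_eq_zero_right (ht _ _ hab), abs_neg]
  by_contra hi
  have hne : ∀ j, t j ≠ 0 := fun j hj =>
    hi (abs_eq_zero.mp ((habs (hconn.preconnected i j).some).trans (by simp [hj])))
  refine hnb ⟨Coloring.mk (fun j => if 0 < t j then 0 else 1) fun {a b} hab => ?_⟩
  have hb : t b = -t a := eq_neg_of_add_eq_zero_right (ht a b hab)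
  rcases (hne a).lt_or_gt with ha | ha
  · simp [hb, ha.not_gt, ha]
  · simp [hb, ha, ha.le]

variable [Fintype V] [DecidableRel G.Adj]

theorem sum_sum_neighborFinset_comm {M : Type*} [AddCommMonoid M] (f : V → V → M) :
    ∑ i, ∑ j ∈ G.neighborFinset i, f i j = ∑ i, ∑ j ∈ G.neighborFinset i, f j i := by
  rw [Finset.sum_comm' (s' := fun j => G.neighborFinset j) (t' := Finset.univ)]
  simp [mem_neighborFinset, adj_comm]

theorem two_mul_sum_mul_sum_neighborFinset_add_mul [CommRing R] (t : V → R) {w : V → V → R}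
    (hw : ∀ i j, w i j = w j i) :
    2 * ∑ i, t i * ∑ j ∈ G.neighborFinset i, (t i + t j) * w i j =
      ∑ i, ∑ j ∈ G.neighborFinset i, (t i + t j) ^ 2 * w i j := by
  set f : V → V → R := fun i j => t i * ((t i + t j) * w i j)
  have hsplit : ∀ i j, (t i + t j) ^ 2 * w i j = f i j + f j i := by
    intro i j
    simp only [f, hw j i]
    ring
  calc 2 * ∑ i, t i * ∑ j ∈ G.neighborFinset i, (t i + t j) * w i j
      = ∑ i, ∑ j ∈ G.neighborFinset i, f i j + ∑ i, ∑ j ∈ G.neighborFinset i, f j i := by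
        rw [two_mul, ← sum_sum_neighborFinset_comm f]
        simp only [f, Finset.mul_sum]
    _ = ∑ i, ∑ j ∈ G.neighborFinset i, (t i + t j) ^ 2 * w i j := by
        simp only [hsplit, Finset.sum_add_distrib]

theorem adj_add_eq_zero_of_sum_mul_sum_neighborFinset_nonpos [CommRing R] [LinearOrder R]
    [IsStrictOrderedRing R] {t : V → R} {w : V → V → R}
    (hw : ∀ i j, w i j = w j i) (hwpos : ∀ i j, G.Adj i j → 0 < w i j)
    (h : ∑ i, t i * ∑ j ∈ G.neighborFinset i, (t i + t j) * w i j ≤ 0) :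
    ∀ i j, G.Adj i j → t i + t j = 0 := by
  have hterm : ∀ i, ∀ j ∈ G.neighborFinset i, 0 ≤ (t i + t j) ^ 2 * w i j := fun i j hj =>
    mul_nonneg (sq_nonneg _) ((hwpos i j ((mem_neighborFinset G i j).mp hj)).le)
  intro i j hij
  have hj : j ∈ G.neighborFinset i := (mem_neighborFinset G i j).mpr hij
  have hle : (t i + t j) ^ 2 * w i j ≤ 0 :=
    calc (t i + t j) ^ 2 * w i j
        ≤ ∑ j ∈ G.neighborFinset i, (t i + t j) ^ 2 * w i j :=
          Finset.single_le_sum (hterm i) hj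
      _ ≤ ∑ i, ∑ j ∈ G.neighborFinset i, (t i + t j) ^ 2 * w i j :=
          Finset.single_le_sum (f := fun i => ∑ j ∈ G.neighborFinset i, (t i + t j) ^ 2 * w i j)
            (fun i _ => Finset.sum_nonneg (hterm i)) (Finset.mem_univ i)
      _ ≤ 0 := by rw [← two_mul_sum_mul_sum_neighborFinset_add_mul t hw]; linarith
  exact pow_eq_zero_iff two_ne_zero |>.mp
    (le_antisymm (nonpos_of_mul_nonpos_left hle (hwpos i j hij)) (sq_nonneg _))

theorem IsRegularOfDegree.eq_of_mul_sum_inv_add_le_one {r : ℕ} [Field R] [LinearOrder R]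
    [IsStrictOrderedRing R] (hreg : G.IsRegularOfDegree r) (hconn : G.Connected)
    (hnb : ¬ G.Colorable 2) {v : V → R} {κ : R} (hκ : 0 ≤ κ)
    (hnn : ∀ i, 0 ≤ v i) (hpos : ∀ i j, G.Adj i j → 0 < v i + v j)
    (hle : ∀ i, κ * ∑ j ∈ G.neighborFinset i, 1 / (v i + v j) ≤ 1)
    (heq : ∀ i, 0 < v i → κ * ∑ j ∈ G.neighborFinset i, 1 / (v i + v j) = 1) (i : V) :
    v i = r * κ / 2 := by
  set a : R := r * κ / 2
  set t : V → R := fun i => v i - a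
  set S : V → R := fun i => ∑ j ∈ G.neighborFinset i, 1 / (v i + v j)
  have hinner : ∀ i, ∑ j ∈ G.neighborFinset i, (t i + t j) * (1 / (v i + v j)) =
      r * (1 - κ * S i) := by
    intro i
    have hterm : ∀ j ∈ G.neighborFinset i,
        (t i + t j) * (1 / (v i + v j)) = 1 - r * κ * (1 / (v i + v j)) := by
      intro j hj
      have := (hpos i j ((mem_neighborFinset G i j).mp hj)).ne'
      simp only [t, a]
      field_simp
      ring
    rw [Finset.sum_congr rfl hterm, Finset.sum_sub_distrib, ← Finset.mul_sum, Finset.sum_const,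
      card_neighborFinset_eq_degree, hreg i, nsmul_one]
    ring
  have hnonpos : ∀ i, t i * (r * (1 - κ * S i)) ≤ 0 := by
    intro i
    rcases (hnn i).lt_or_eq with hvi | hvi
    · simp only [S, heq i hvi, sub_self, mul_zero, le_refl]
    · have hti : t i = -a := by simp [t, ← hvi]
      have ha : 0 ≤ a := by positivity
      have hr : 0 ≤ (r : R) * (1 - κ * S i) := mul_nonneg r.cast_nonneg (sub_nonneg.mpr (hle i))
      rw [hti, neg_mul]
      exact neg_nonpos.mpr (mul_nonneg ha hr)
  have hadj := adj_add_eq_zero_of_sum_mul_sum_neighborFinset_nonpos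
    (fun i j => by rw [add_comm]) (fun i j hij => one_div_pos.mpr (hpos i j hij))
    (Finset.sum_nonpos fun i _ => (hinner i).symm ▸ hnonpos i)
  exact sub_eq_zero.mp (hconn.eq_zero_of_forall_adj_add_eq_zero hnb hadj i)

end SimpleGraph

section Equilibria

variable {m : ℕ} {G : SimpleGraph (Fin m)} [DecidableRel G.Adj]

theorem lyapGrad_one (v : Fin m → ℝ) (i : Fin m) :
    lyapGrad m G 1 v i =
      -1 + 1 / (G.edgeFinset.card : ℝ) * ∑ j ∈ G.neighborFinset i, 1 / (v i + v j) := by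
  simp only [lyapGrad, sub_self, Real.rpow_zero, Real.rpow_one]

theorem urnField_one (x : Fin m → ℝ) (i : Fin m) :
    urnField m G 1 x i = x i * lyapGrad m G 1 x i := by
  simp only [urnField, lyapGrad_one, Real.rpow_one, mul_add, Finset.mul_sum]
  congr 1
  · ring
  · exact Finset.sum_congr rfl fun j _ => by ring

theorem eq_uniform_of_mem_equilibria {r : ℕ} {c : ℝ} (hreg : G.IsRegularOfDegree r)
    (hconn : G.Connected) (hnb : ¬ G.Colorable 2) (hc : 0 < c) {v : Fin m → ℝ}
    (hv : v ∈ equilibria m G 1 c) (hgrad : ∀ i, v i = 0 → lyapGrad m G 1 v i ≤ 0) :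
    v = fun _ => 1 / (m : ℝ) := by
  obtain ⟨⟨hnn, hsum, hedge⟩, hF⟩ := hv
  have hzero : ∀ i, 0 < v i → lyapGrad m G 1 v i = 0 := fun i hvi =>
    (mul_eq_zero.mp ((urnField_one v i).symm.trans (congrFun hF i))).resolve_left hvi.ne'
  have hle : ∀ i, lyapGrad m G 1 v i ≤ 0 := fun i =>
    (hnn i).lt_or_eq.elim (fun hvi => (hzero i hvi).le) fun hvi => hgrad i hvi.symm
  have hconst := hreg.eq_of_mul_sum_inv_add_le_one hconn hnb
    (κ := 1 / (G.edgeFinset.card : ℝ)) (by positivity) hnn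
    (fun i j hij => hc.trans_le (hedge i j hij))
    (fun i => by linarith [hle i, lyapGrad_one (G := G) v i])
    (fun i hvi => by linarith [hzero i hvi, lyapGrad_one (G := G) v i])
  simp only [hconst, Finset.sum_const, Finset.card_univ, Fintype.card_fin, nsmul_eq_mul] at hsum
  funext i
  rw [hconst, eq_one_div_of_mul_eq_one_right hsum]

end Equilibria

theorem regular_nonbipartite_unstable_equilibria_general
    {m r : ℕ} {G : SimpleGraph (Fin m)} [DecidableRel G.Adj] {c : ℝ}
    (hreg : G.IsRegularOfDegree r) (hconn : G.Connected) (hnb : ¬ G.Colorable 2)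
    (hc : 0 < c) :
    (∀ v ∈ equilibria m G 1 c, v ≠ (fun _ => 1 / (m : ℝ)) →
      ∃ i, v i = 0 ∧ 0 < lyapGrad m G 1 v i) ∧
    (∀ v ∈ equilibria m G 1 c, (∀ i, 0 < v i) → v = fun _ => 1 / (m : ℝ)) := by
  refine ⟨fun v hv hne => ?_, fun v hv hpos =>
    eq_uniform_of_mem_equilibria hreg hconn hnb hc hv fun i hvi => absurd hvi (hpos i).ne'⟩
  by_contra! hgrad
  exact hne (eq_uniform_of_mem_equilibria hreg hconn hnb hc hv hgrad)

/-- **Lemma (regular non-bipartite, `α = 1`).** For every equilibrium `v ∈ Λ` with `v ≠ u`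
(`u` the uniform measure) there is an index `i` with `v_i = 0` and `∂L/∂v_i(v) > 0`; in
particular every element of `Λ \ {u}` is unstable, and `u` is the only equilibrium with all
coordinates positive. -/
theorem regular_nonbipartite_unstable_equilibria
    {m r : ℕ} {G : SimpleGraph (Fin m)} [DecidableRel G.Adj] {c : ℝ}
    (hreg : G.IsRegularOfDegree r) (hconn : G.Connected) (hnb : ¬ G.Colorable 2)
    (hc : 0 < c) (hcN : c < 1 / (G.edgeFinset.card : ℝ)) :
    (∀ v ∈ equilibria m G 1 c, v ≠ (fun _ => 1 / (m : ℝ)) →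
      ∃ i, v i = 0 ∧ 0 < lyapGrad m G 1 v i) ∧
    (∀ v ∈ equilibria m G 1 c, (∀ i, 0 < v i) → v = fun _ => 1 / (m : ℝ)) :=
  regular_nonbipartite_unstable_equilibria_general hreg hconn hnb hc
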